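/- For every integer λ ≥ 2, the tree T_λ has exactly two main eigenvalues, and exactly three distinct vertex degrees, and its valency partition is equitable. -/

import Mathlib

open Matrix

def SimpleGraph.IsMainEigenvalue {V : Type*} [Fintype V] [DecidableEq V]
    (G : SimpleGraph V) [DecidableRel G.Adj] (μ : ℝ) : Prop :=
  ∃ x : V → ℝ, x ≠ 0 ∧ (G.adjMatrix ℝ).mulVec x = μ • x ∧ x ⬝ᵥ (fun _ => (1 : ℝ)) ≠ 0

/-- Vertex set of the harmonic tree `T_λ`: a center, `λ² - λ + 1` middle vertices,
and `λ - 1` leaves attached to each middle vertex. -/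
abbrev TlamV (l : ℕ) : Type :=
  Unit ⊕ Fin (l ^ 2 - l + 1) ⊕ (Fin (l ^ 2 - l + 1) × Fin (l - 1))

/-- The harmonic tree `T_λ`: the center is adjacent to every middle vertex, and each
middle vertex `i` is adjacent to its `λ - 1` private leaves. -/
def Tlam (l : ℕ) : SimpleGraph (TlamV l) :=
  SimpleGraph.fromRel (fun a b =>
    match a, b with
    | Sum.inl _, Sum.inr (Sum.inl _) => True
    | Sum.inr (Sum.inl i), Sum.inr (Sum.inr p) => p.1 = i
    | _, _ => False)

/-!
`T_λ` is `λ`-harmonic: with `A` its adjacency matrix and `d` its degree vector, `A 𝟙 = d` and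
`A d = λ d`. Pairing an eigenvector `A x = μ x` with `𝟙` and `d` gives `μ ⟪x, 𝟙⟫ = ⟪x, d⟫` and
`μ ⟪x, d⟫ = λ ⟪x, d⟫`, so a main eigenvalue is `0` or `λ`; both occur, witnessed by `d` and by
`λ 𝟙 - d`, whose sum of entries `λ n - ∑ d` is positive.
-/

open Finset

namespace SimpleGraph

variable {V : Type*} [Fintype V] (G : SimpleGraph V) [DecidableRel G.Adj]

def degreeVec : V → ℝ := fun v => G.degree v

def IsHarmonic (c : ℕ) : Prop := ∀ v, ∑ w ∈ G.neighborFinset v, G.degree w = c * G.degree v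

def neighborDegreeCount (v : V) (k : ℕ) : ℕ := #{z ∈ G.neighborFinset v | G.degree z = k}

def IsValencyPartitionEquitable : Prop :=
  ∀ v w, G.degree v = G.degree w → G.neighborDegreeCount v = G.neighborDegreeCount w

theorem degree_eq_sum_if_adj_nat (v : V) : G.degree v = ∑ w, if G.Adj v w then 1 else 0 :=
  G.degree_eq_sum_if_adj (R := ℕ) v

theorem neighborDegreeCount_eq_sum (v : V) (k : ℕ) :
    G.neighborDegreeCount v k = ∑ w, if G.Adj v w ∧ G.degree w = k then 1 else 0 := by
  rw [neighborDegreeCount, neighborFinset_eq_filter, filter_filter, card_filter]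

theorem adjMatrix_mulVec_one : G.adjMatrix ℝ *ᵥ (fun _ => 1) = G.degreeVec := by
  ext v; simp [degreeVec]

theorem adjMatrix_mulVec_dotProduct (x y : V → ℝ) :
    (G.adjMatrix ℝ *ᵥ x) ⬝ᵥ y = x ⬝ᵥ (G.adjMatrix ℝ *ᵥ y) := by
  rw [dotProduct_mulVec, ← mulVec_transpose, transpose_adjMatrix]

variable {G}

theorem IsHarmonic.adjMatrix_mulVec_degreeVec {c : ℕ} (hG : G.IsHarmonic c) :
    G.adjMatrix ℝ *ᵥ G.degreeVec = (c : ℝ) • G.degreeVec := by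
  ext v
  simp [adjMatrix_mulVec_apply, degreeVec, ← Nat.cast_sum, hG v]

variable [DecidableEq V]

theorem isMainEigenvalue_of_mulVec_eq {μ : ℝ} {x : V → ℝ} (hx : G.adjMatrix ℝ *ᵥ x = μ • x)
    (hx1 : x ⬝ᵥ (fun _ => 1) ≠ 0) : G.IsMainEigenvalue μ :=
  ⟨x, by rintro rfl; simp at hx1, hx, hx1⟩

namespace IsHarmonic

variable {c : ℕ}

theorem eq_zero_or_eq_of_isMainEigenvalue (hG : G.IsHarmonic c) {μ : ℝ}
    (hμ : G.IsMainEigenvalue μ) : μ = 0 ∨ μ = c := by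
  obtain ⟨x, -, hx, hx1⟩ := hμ
  have h1 : μ * (x ⬝ᵥ fun _ => 1) = x ⬝ᵥ G.degreeVec := by
    rw [← smul_eq_mul, ← smul_dotProduct, ← hx, adjMatrix_mulVec_dotProduct, adjMatrix_mulVec_one]
  have hd : μ * (x ⬝ᵥ G.degreeVec) = c * (x ⬝ᵥ G.degreeVec) := by
    rw [← smul_eq_mul, ← smul_dotProduct, ← hx, adjMatrix_mulVec_dotProduct,
      hG.adjMatrix_mulVec_degreeVec, dotProduct_smul, smul_eq_mul]
  rcases mul_eq_zero.mp (show (μ - c) * (x ⬝ᵥ G.degreeVec) = 0 by rw [sub_mul, hd, sub_self])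
    with h | h
  · exact Or.inr (sub_eq_zero.mp h)
  · rw [h] at h1
    exact Or.inl ((mul_eq_zero.mp h1).resolve_right hx1)

theorem isMainEigenvalue (hG : G.IsHarmonic c) {v : V} (hv : G.degree v ≠ 0) :
    G.IsMainEigenvalue c := by
  refine isMainEigenvalue_of_mulVec_eq hG.adjMatrix_mulVec_degreeVec (ne_of_gt ?_)
  simp only [dotProduct, degreeVec, mul_one]
  exact sum_pos' (fun _ _ => by positivity) ⟨v, mem_univ v, by positivity⟩

theorem isMainEigenvalue_zero (hG : G.IsHarmonic c)
    (hc : ∑ v, G.degree v ≠ c * Fintype.card V) : G.IsMainEigenvalue 0 := by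
  refine isMainEigenvalue_of_mulVec_eq (x := (c : ℝ) • (fun _ => 1) - G.degreeVec) ?_ ?_
  · rw [mulVec_sub, mulVec_smul, adjMatrix_mulVec_one, hG.adjMatrix_mulVec_degreeVec, sub_self,
      zero_smul]
  · have hc' : (∑ v, G.degree v : ℝ) ≠ c * Fintype.card V := by exact_mod_cast hc
    simpa [dotProduct, degreeVec, sub_eq_zero, mul_comm] using hc'.symm

theorem setOf_isMainEigenvalue (hG : G.IsHarmonic c) {v : V} (hv : G.degree v ≠ 0)
    (hc : ∑ v, G.degree v ≠ c * Fintype.card V) : {μ | G.IsMainEigenvalue μ} = {0, (c : ℝ)} := by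
  ext μ
  refine ⟨hG.eq_zero_or_eq_of_isMainEigenvalue, ?_⟩
  rintro (rfl | rfl)
  exacts [hG.isMainEigenvalue_zero hc, hG.isMainEigenvalue hv]

end IsHarmonic

end SimpleGraph

namespace Tlam

theorem card_vertex {l : ℕ} :
    Fintype.card (TlamV l) = 1 + (l ^ 2 - l + 1 + (l ^ 2 - l + 1) * (l - 1)) := by
  simp

variable {l : ℕ} [DecidableRel (Tlam l).Adj]

theorem degree_inl (u : Unit) : (Tlam l).degree (.inl u) = l ^ 2 - l + 1 := by
  rw [SimpleGraph.degree_eq_sum_if_adj_nat]; simp [Fintype.sum_sum_type, Tlam]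

theorem degree_inr_inl (hl : 1 ≤ l) (i : Fin (l ^ 2 - l + 1)) :
    (Tlam l).degree (.inr (.inl i)) = l := by
  rw [SimpleGraph.degree_eq_sum_if_adj_nat]
  simp only [Fintype.sum_sum_type, Fintype.sum_prod_type]
  simp [Tlam, Nat.add_sub_cancel' hl]

theorem degree_inr_inr (p : Fin (l ^ 2 - l + 1) × Fin (l - 1)) :
    (Tlam l).degree (.inr (.inr p)) = 1 := by
  rw [SimpleGraph.degree_eq_sum_if_adj_nat]; simp [Fintype.sum_sum_type, Tlam]

theorem isHarmonic (hl : 1 ≤ l) : (Tlam l).IsHarmonic l := by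
  have hmid : l ^ 2 - l + 1 + (l - 1) = l * l := by
    zify [Nat.le_self_pow two_ne_zero l, hl]; ring
  rintro (u | i | p) <;>
    simp only [SimpleGraph.neighborFinset_eq_filter, sum_filter, Fintype.sum_sum_type,
      Fintype.sum_prod_type, degree_inl, degree_inr_inl hl, degree_inr_inr] <;>
    simp [Tlam, mul_comm, hmid]

theorem sum_degree (hl : 1 ≤ l) :
    ∑ v, (Tlam l).degree v = l ^ 2 - l + 1 + ((l ^ 2 - l + 1) * l + (l ^ 2 - l + 1) * (l - 1)) := by
  simp [Fintype.sum_sum_type, degree_inl, degree_inr_inl hl, degree_inr_inr]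

theorem sum_degree_lt (hl : 2 ≤ l) : ∑ v, (Tlam l).degree v < l * Fintype.card (TlamV l) := by
  rw [sum_degree (by omega), card_vertex]
  obtain ⟨j, rfl⟩ : ∃ j, l = j + 2 := ⟨l - 2, by omega⟩
  generalize (j + 2) ^ 2 - (j + 2) + 1 = m
  rw [show j + 2 - 1 = j + 1 by omega]
  nlinarith [Nat.zero_le (m * j * j), Nat.zero_le (m * j)]

theorem range_degree (hl : 2 ≤ l) :
    Set.range (fun v => (Tlam l).degree v) = {l ^ 2 - l + 1, l, 1} := by
  ext d
  constructor
  · rintro ⟨u | i | p, rfl⟩ <;>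
      simp [degree_inl, degree_inr_inl (by omega : 1 ≤ l), degree_inr_inr]
  · rintro (rfl | rfl | rfl)
    exacts [⟨.inl (), degree_inl ()⟩, ⟨.inr (.inl 0), degree_inr_inl (by omega) 0⟩,
      ⟨.inr (.inr (0, ⟨0, by omega⟩)), degree_inr_inr _⟩]

theorem neighborDegreeCount_inl (hl : 1 ≤ l) (u : Unit) (k : ℕ) :
    (Tlam l).neighborDegreeCount (.inl u) k = if l = k then l ^ 2 - l + 1 else 0 := by
  rw [SimpleGraph.neighborDegreeCount_eq_sum]
  simp only [Fintype.sum_sum_type, Fintype.sum_prod_type, degree_inl, degree_inr_inl hl,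
    degree_inr_inr]
  simp [Tlam]

theorem neighborDegreeCount_inr_inl (hl : 1 ≤ l) (i : Fin (l ^ 2 - l + 1)) (k : ℕ) :
    (Tlam l).neighborDegreeCount (.inr (.inl i)) k =
      (if l ^ 2 - l + 1 = k then 1 else 0) + if 1 = k then l - 1 else 0 := by
  rw [SimpleGraph.neighborDegreeCount_eq_sum]
  simp only [Fintype.sum_sum_type, Fintype.sum_prod_type, degree_inl, degree_inr_inl hl,
    degree_inr_inr]
  simp [Tlam, ite_and]

theorem neighborDegreeCount_inr_inr (hl : 1 ≤ l) (p : Fin (l ^ 2 - l + 1) × Fin (l - 1)) (k : ℕ) :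
    (Tlam l).neighborDegreeCount (.inr (.inr p)) k = if l = k then 1 else 0 := by
  rw [SimpleGraph.neighborDegreeCount_eq_sum]
  simp only [Fintype.sum_sum_type, Fintype.sum_prod_type, degree_inl, degree_inr_inl hl,
    degree_inr_inr]
  simp [Tlam, ite_and]

theorem isValencyPartitionEquitable (hl : 2 ≤ l) : (Tlam l).IsValencyPartitionEquitable := by
  have h1 : 1 ≤ l := by omega
  have h2 : 2 * l ≤ l ^ 2 := by nlinarith
  rintro (u | i | p) (u' | i' | p') hdeg <;>
    simp only [degree_inl, degree_inr_inl h1, degree_inr_inr] at hdeg <;>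
    first
    | omega
    | ext k; simp only [neighborDegreeCount_inl h1, neighborDegreeCount_inr_inl h1,
        neighborDegreeCount_inr_inr h1]

end Tlam

theorem stmt_17 (l : ℕ) (hl : 2 ≤ l) [DecidableRel (Tlam l).Adj] :
    {μ : ℝ | (Tlam l).IsMainEigenvalue μ}.ncard = 2 ∧
    {d : ℕ | ∃ v : TlamV l, (Tlam l).degree v = d}.ncard = 3 ∧
    (∀ v w : TlamV l, (Tlam l).degree v = (Tlam l).degree w →
      ∀ k : ℕ, (((Tlam l).neighborFinset v).filter (fun z => (Tlam l).degree z = k)).card =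
        (((Tlam l).neighborFinset w).filter (fun z => (Tlam l).degree z = k)).card) := by
  have h2 : 2 * l ≤ l ^ 2 := by nlinarith
  refine ⟨?_, ?_, fun v w h => congrFun (Tlam.isValencyPartitionEquitable hl v w h)⟩
  · rw [(Tlam.isHarmonic (by omega)).setOf_isMainEigenvalue (v := .inl ())
      (by rw [Tlam.degree_inl]; omega) (Tlam.sum_degree_lt hl).ne, Set.ncard_pair]
    exact_mod_cast (by omega : 0 ≠ l)
  · exact Set.ncard_eq_three.mpr ⟨_, _, _, by omega, by omega, by omega, Tlam.range_degree hl⟩
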